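/- Let f : R^q → R^m be piecewise affine with corresponding polyhedral subdivision 𝒫. Then for every x ∈ R^q, the family 𝒫'(x) = {cone(P - x) : P ∈ 𝒫(x)} is a conical subdivision of R^q, i.e., a finite family of q-dimensional polyhedral convex cones covering R^q whose pairwise intersections are either empty or common proper faces. -/

import Mathlib

/-!
Translating by `-x` reduces everything to the point `0`. For a convex set `C ∋ 0`, a vector `w`
lies in `coneHull C` iff `ε • w ∈ C` for some `ε > 0`, and then for all smaller `ε` as well.
Hence the cone of a polyhedron through `0` is cut out by its constraints active at `0`; the cones
of two convex sets through `0` meet in the cone of their intersection; and a face `F ∋ 0` of `C`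
satisfies `C ∩ coneHull F = F`, which makes `coneHull F` a face of `coneHull C`, proper if `F` is.
The cones cover the space because, the subdivision being finite, one of its closed cells contains
`ε • w` for arbitrarily small `ε > 0`, and therefore also `0`.
-/
open scoped RealInnerProductSpace

/-- `F` is a face of the convex set `P`. -/
def IsFace {q : ℕ} (P F : Set (EuclideanSpace ℝ (Fin q))) : Prop :=
  F ⊆ P ∧ Convex ℝ F ∧
    ∀ x ∈ P, ∀ y ∈ P, ∀ t : ℝ, 0 < t → t < 1 → t • x + (1 - t) • y ∈ F → x ∈ F ∧ y ∈ F

/-- `F` is a proper face of `P`: a nonempty face different from `P`. -/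
def IsProperFace {q : ℕ} (P F : Set (EuclideanSpace ℝ (Fin q))) : Prop :=
  IsFace P F ∧ F.Nonempty ∧ F ≠ P

/-- A polyhedral convex set: a finite intersection of closed halfspaces. -/
def IsPolyhedral {q : ℕ} (P : Set (EuclideanSpace ℝ (Fin q))) : Prop :=
  ∃ H : Finset (EuclideanSpace ℝ (Fin q) × ℝ), P = {x | ∀ p ∈ H, ⟪p.1, x⟫ ≤ p.2}

/-- A polyhedral subdivision of `ℝ^q`: a finite family of full-dimensional
(`q`-dimensional) polyhedral convex sets covering `ℝ^q`, any two distinct members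
of which intersect in the empty set or in a common proper face. -/
def IsPolyhedralSubdivision {q : ℕ} (𝒞 : Set (Set (EuclideanSpace ℝ (Fin q)))) : Prop :=
  𝒞.Finite ∧
    (∀ P ∈ 𝒞, IsPolyhedral P ∧ (interior P).Nonempty) ∧
    ⋃₀ 𝒞 = Set.univ ∧
    ∀ P ∈ 𝒞, ∀ Q ∈ 𝒞, P ≠ Q →
      P ∩ Q = ∅ ∨ (IsProperFace P (P ∩ Q) ∧ IsProperFace Q (P ∩ Q))

/-- The smallest cone containing a set `C` (here `w ∈ coneHull C` iff `w` is a
positive multiple of an element of `C`). -/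
def coneHull {q : ℕ} (C : Set (EuclideanSpace ℝ (Fin q))) :
    Set (EuclideanSpace ℝ (Fin q)) :=
  {w | ∃ μ : ℝ, 0 < μ ∧ ∃ v ∈ C, w = μ • v}

open Filter Topology

variable {q : ℕ}

theorem IsPolyhedral.isClosed {P : Set (EuclideanSpace ℝ (Fin q))} (hP : IsPolyhedral P) :
    IsClosed P := by
  obtain ⟨H, rfl⟩ := hP
  simp only [Set.ofPred_forall]
  exact isClosed_biInter fun p _ => isClosed_le (by fun_prop) continuous_const

theorem IsPolyhedral.convex {P : Set (EuclideanSpace ℝ (Fin q))} (hP : IsPolyhedral P) :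
    Convex ℝ P := by
  obtain ⟨H, rfl⟩ := hP
  simp only [Set.ofPred_forall]
  exact convex_iInter₂ fun p _ => convex_halfSpace_le (innerₛₗ ℝ p.1).isLinear p.2

theorem mem_image_sub_const {E : Type*} [AddGroup E] {P : Set E} {x y : E} :
    y ∈ (fun p => p - x) '' P ↔ y + x ∈ P :=
  ⟨by rintro ⟨p, hp, rfl⟩; simpa using hp, fun h => ⟨y + x, h, add_sub_cancel_right y x⟩⟩

theorem IsPolyhedral.image_sub_const {P : Set (EuclideanSpace ℝ (Fin q))} (hP : IsPolyhedral P)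
    (x : EuclideanSpace ℝ (Fin q)) : IsPolyhedral ((fun p => p - x) '' P) := by
  classical
  obtain ⟨H, rfl⟩ := hP
  refine ⟨H.image fun p => (p.1, p.2 - ⟪p.1, x⟫), Set.ext fun y => ?_⟩
  simp only [mem_image_sub_const, Set.mem_ofPred_eq, Finset.forall_mem_image, inner_add_right,
    le_sub_iff_add_le]

theorem IsFace.image_sub_const {P F : Set (EuclideanSpace ℝ (Fin q))} (hF : IsFace P F)
    (x : EuclideanSpace ℝ (Fin q)) :
    IsFace ((fun p => p - x) '' P) ((fun p => p - x) '' F) := by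
  obtain ⟨hFP, hFc, hface⟩ := hF
  refine ⟨Set.image_mono hFP, by simpa [sub_eq_neg_add] using hFc.translate (-x), ?_⟩
  rintro _ ⟨p, hp, rfl⟩ _ ⟨r, hr, rfl⟩ t ht0 ht1 hmem
  have hcomb : t • (p - x) + (1 - t) • (r - x) = (t • p + (1 - t) • r) - x := by module
  rw [hcomb, sub_left_injective.mem_set_image] at hmem
  obtain ⟨hpF, hrF⟩ := hface p hp r hr t ht0 ht1 hmem
  exact ⟨Set.mem_image_of_mem _ hpF, Set.mem_image_of_mem _ hrF⟩

theorem IsProperFace.image_sub_const {P F : Set (EuclideanSpace ℝ (Fin q))}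
    (hF : IsProperFace P F) (x : EuclideanSpace ℝ (Fin q)) :
    IsProperFace ((fun p => p - x) '' P) ((fun p => p - x) '' F) :=
  ⟨hF.1.image_sub_const x, hF.2.1.image _,
    fun h => hF.2.2 (Set.image_injective.2 sub_left_injective h)⟩

theorem IsPolyhedralSubdivision.image_sub_const {𝒞 : Set (Set (EuclideanSpace ℝ (Fin q)))}
    (h𝒞 : IsPolyhedralSubdivision 𝒞) (x : EuclideanSpace ℝ (Fin q)) :
    IsPolyhedralSubdivision ((fun P => (fun p => p - x) '' P) '' 𝒞) := by
  obtain ⟨hfin, hmem, hcov, hpair⟩ := h𝒞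
  refine ⟨hfin.image _, ?_, ?_, ?_⟩
  · rintro _ ⟨P, hP, rfl⟩
    exact ⟨(hmem P hP).1.image_sub_const x,
      ((hmem P hP).2.image _).mono ((isOpenMap_sub_right x).image_interior_subset P)⟩
  · refine Set.eq_univ_of_forall fun y => ?_
    obtain ⟨P, hP, hyP⟩ := Set.mem_sUnion.1 (hcov ▸ Set.mem_univ (y + x))
    exact ⟨_, ⟨P, hP, rfl⟩, mem_image_sub_const.2 hyP⟩
  · rintro _ ⟨P, hP, rfl⟩ _ ⟨R, hR, rfl⟩ hne
    rw [← Set.image_inter sub_left_injective]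
    exact (hpair P hP R hR (ne_of_apply_ne _ hne)).imp (fun h => by rw [h, Set.image_empty])
      fun h => ⟨h.1.image_sub_const x, h.2.image_sub_const x⟩

theorem subset_coneHull (C : Set (EuclideanSpace ℝ (Fin q))) : C ⊆ coneHull C :=
  fun v hv => ⟨1, one_pos, v, hv, (one_smul ℝ v).symm⟩

theorem coneHull_mono {C D : Set (EuclideanSpace ℝ (Fin q))} (h : C ⊆ D) :
    coneHull C ⊆ coneHull D := by
  rintro _ ⟨μ, hμ, v, hv, rfl⟩
  exact ⟨μ, hμ, v, h hv, rfl⟩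

theorem smul_mem_coneHull {C : Set (EuclideanSpace ℝ (Fin q))} {c : ℝ} (hc : 0 < c)
    {w : EuclideanSpace ℝ (Fin q)} (hw : w ∈ coneHull C) : c • w ∈ coneHull C := by
  obtain ⟨μ, hμ, v, hv, rfl⟩ := hw
  exact ⟨c * μ, mul_pos hc hμ, v, hv, smul_smul c μ v⟩

theorem mem_coneHull_iff_exists_smul_mem {C : Set (EuclideanSpace ℝ (Fin q))}
    {w : EuclideanSpace ℝ (Fin q)} : w ∈ coneHull C ↔ ∃ ε : ℝ, 0 < ε ∧ ε • w ∈ C := by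
  constructor
  · rintro ⟨μ, hμ, v, hv, rfl⟩
    exact ⟨μ⁻¹, inv_pos.2 hμ, by rwa [inv_smul_smul₀ hμ.ne']⟩
  · rintro ⟨ε, hε, hεw⟩
    exact ⟨ε⁻¹, inv_pos.2 hε, ε • w, hεw, (inv_smul_smul₀ hε.ne' w).symm⟩

theorem Convex.coneHull_eq_hull {C : Set (EuclideanSpace ℝ (Fin q))} (hC : Convex ℝ C) :
    coneHull C = ConvexCone.hull ℝ C := by
  ext w
  simp only [SetLike.mem_coe, ConvexCone.mem_hull_of_convex hC, Set.mem_smul_set, coneHull,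
    Set.mem_ofPred_eq, eq_comm]

theorem Convex.coneHull {C : Set (EuclideanSpace ℝ (Fin q))} (hC : Convex ℝ C) :
    Convex ℝ (coneHull C) :=
  hC.coneHull_eq_hull ▸ (ConvexCone.hull ℝ C).convex

theorem StarConvex.smul_mem_of_smul_mem {E : Type*} [AddCommGroup E] [Module ℝ E] {C : Set E}
    (hC : StarConvex ℝ 0 C) {w : E} {δ ε : ℝ} (hδ : 0 ≤ δ) (hδε : δ ≤ ε) (hεw : ε • w ∈ C) :
    δ • w ∈ C := by
  rcases hδ.eq_or_lt with rfl | hδ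
  · simpa using hC.mem ⟨_, hεw⟩
  have hε : 0 < ε := hδ.trans_le hδε
  have := hC.smul_mem hεw (div_nonneg hδ.le hε.le) ((div_le_one hε).2 hδε)
  rwa [smul_smul, div_mul_cancel₀ δ hε.ne'] at this

theorem coneHull_inter {C D : Set (EuclideanSpace ℝ (Fin q))} (hC : Convex ℝ C)
    (hD : Convex ℝ D) (hC0 : 0 ∈ C) (hD0 : 0 ∈ D) :
    coneHull (C ∩ D) = coneHull C ∩ coneHull D := by
  refine (Set.subset_inter (coneHull_mono Set.inter_subset_left)
    (coneHull_mono Set.inter_subset_right)).antisymm ?_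
  rintro w ⟨hwC, hwD⟩
  rw [mem_coneHull_iff_exists_smul_mem] at hwC hwD ⊢
  obtain ⟨ε, hε, hεw⟩ := hwC
  obtain ⟨δ, hδ, hδw⟩ := hwD
  exact ⟨min ε δ, lt_min hε hδ,
    (hC.starConvex hC0).smul_mem_of_smul_mem (lt_min hε hδ).le (min_le_left ε δ) hεw,
    (hD.starConvex hD0).smul_mem_of_smul_mem (lt_min hε hδ).le (min_le_right ε δ) hδw⟩

theorem IsPolyhedral.coneHull {C : Set (EuclideanSpace ℝ (Fin q))} (hC : IsPolyhedral C)
    (h0 : 0 ∈ C) : IsPolyhedral (coneHull C) := by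
  classical
  obtain ⟨H, rfl⟩ := hC
  refine ⟨H.filter fun p => p.2 = 0, Set.ext fun w => ⟨?_, fun hw => ?_⟩⟩
  · rintro ⟨μ, hμ, v, hv, rfl⟩ p hp
    obtain ⟨hpH, hp0⟩ := Finset.mem_filter.1 hp
    rw [real_inner_smul_right, hp0]
    exact mul_nonpos_of_nonneg_of_nonpos hμ.le (hp0 ▸ hv p hpH)
  -- a constraint inactive at `0` is strict there, so it survives a small step along `w`
  have hsmall : ∀ᶠ ε in 𝓝[>] (0 : ℝ), ∀ p ∈ H, ⟪p.1, ε • w⟫ ≤ p.2 := by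
    refine Filter.eventually_all_finset H |>.2 fun p hpH => ?_
    rcases (show (0 : ℝ) ≤ p.2 by simpa using h0 p hpH).eq_or_lt with hp0 | hp0
    · filter_upwards [self_mem_nhdsWithin] with ε hε
      rw [real_inner_smul_right, ← hp0]
      exact mul_nonpos_of_nonneg_of_nonpos (le_of_lt hε)
        (hp0 ▸ hw p (Finset.mem_filter.2 ⟨hpH, hp0.symm⟩))
    · have hcont : Continuous fun ε : ℝ => ⟪p.1, ε • w⟫ := by fun_prop
      refine nhdsWithin_le_nhds ((hcont.continuousAt.eventually_lt continuousAt_const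
        (by simpa using hp0)).mono fun ε hε => hε.le)
  obtain ⟨ε, hεw, hε⟩ := (hsmall.and self_mem_nhdsWithin).exists
  exact mem_coneHull_iff_exists_smul_mem.2 ⟨ε, hε, hεw⟩

theorem IsFace.smul_mem {C F : Set (EuclideanSpace ℝ (Fin q))} (hF : IsFace C F) (h0 : 0 ∈ F)
    {g : EuclideanSpace ℝ (Fin q)} (hg : g ∈ F) {κ : ℝ} (hκ : 0 < κ) (hκg : κ • g ∈ C) :
    κ • g ∈ F := by
  obtain ⟨hFC, hFc, hface⟩ := hF
  rcases le_or_gt κ 1 with hκ1 | hκ1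
  · exact hFc.smul_mem_of_zero_mem h0 hg ⟨hκ.le, hκ1⟩
  · refine (hface (κ • g) hκg 0 (hFC h0) κ⁻¹ (inv_pos.2 hκ) (inv_lt_one_of_one_lt₀ hκ1) ?_).1
    rwa [smul_zero, add_zero, inv_smul_smul₀ hκ.ne']

theorem IsFace.inter_coneHull_subset {C F : Set (EuclideanSpace ℝ (Fin q))} (hF : IsFace C F)
    (h0 : 0 ∈ F) : C ∩ coneHull F ⊆ F := by
  rintro _ ⟨hw, μ, hμ, g, hg, rfl⟩
  exact hF.smul_mem h0 hg hμ hw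

theorem IsFace.eq_of_coneHull_eq {C F : Set (EuclideanSpace ℝ (Fin q))} (hF : IsFace C F)
    (h0 : 0 ∈ F) (h : coneHull F = coneHull C) : F = C :=
  hF.1.antisymm fun _ hp => hF.inter_coneHull_subset h0 ⟨hp, h ▸ subset_coneHull C hp⟩

theorem IsFace.coneHull {C F : Set (EuclideanSpace ℝ (Fin q))} (hC : Convex ℝ C)
    (hF : IsFace C F) (h0 : 0 ∈ F) : IsFace (coneHull C) (coneHull F) := by
  refine ⟨coneHull_mono hF.1, hF.2.1.coneHull, ?_⟩
  rintro _ ⟨μ, hμ, p, hp, rfl⟩ _ ⟨ν, hν, r, hr, rfl⟩ t ht0 ht1 hmem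
  have ht1' : 0 < 1 - t := sub_pos.2 ht1
  set s := t * μ + (1 - t) * ν
  have hs : 0 < s := by positivity
  have ha : 0 < t * μ / s := by positivity
  have ha1 : t * μ / s < 1 := (div_lt_one hs).2 (lt_add_of_pos_right _ (by positivity))
  -- rescaled by `s⁻¹`, the combination of `μ • p` and `ν • r` is a combination of `p` and `r`
  have hcomb : s⁻¹ • (t • μ • p + (1 - t) • ν • r) = (t * μ / s) • p + (1 - t * μ / s) • r := by
    match_scalars
    · field_simp
    · field_simp
      ring
  have hmemC : (t * μ / s) • p + (1 - t * μ / s) • r ∈ C :=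
    hC hp hr ha.le (sub_nonneg.2 ha1.le) (add_sub_cancel _ _)
  have hmemF := hF.inter_coneHull_subset h0 ⟨hmemC, hcomb ▸ smul_mem_coneHull (inv_pos.2 hs) hmem⟩
  obtain ⟨hpF, hrF⟩ := hF.2.2 p hp r hr _ ha ha1 hmemF
  exact ⟨⟨μ, hμ, p, hpF, rfl⟩, ⟨ν, hν, r, hrF, rfl⟩⟩

theorem IsProperFace.coneHull {C F : Set (EuclideanSpace ℝ (Fin q))} (hC : Convex ℝ C)
    (hF : IsProperFace C F) (h0 : 0 ∈ F) : IsProperFace (coneHull C) (coneHull F) :=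
  ⟨hF.1.coneHull hC h0, ⟨0, subset_coneHull F h0⟩,
    fun h => hF.2.2 (IsFace.eq_of_coneHull_eq hF.1 h0 h)⟩

theorem Set.Finite.exists_zero_mem_smul_mem_of_closed_cover {E : Type*} [AddCommGroup E]
    [Module ℝ E] [TopologicalSpace E] [ContinuousSMul ℝ E] {𝒞 : Set (Set E)} (hfin : 𝒞.Finite)
    (hclosed : ∀ P ∈ 𝒞, IsClosed P) (hcov : ⋃₀ 𝒞 = Set.univ) (w : E) :
    ∃ P ∈ 𝒞, 0 ∈ P ∧ ∃ ε : ℝ, 0 < ε ∧ ε • w ∈ P := by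
  obtain ⟨P, hP, hfreq⟩ : ∃ P ∈ 𝒞, ∃ᶠ ε in 𝓝[>] (0 : ℝ), ε • w ∈ P := by
    by_contra! h
    obtain ⟨ε, hε⟩ := (hfin.eventually_all.2 h).exists
    obtain ⟨P, hP, hεP⟩ := Set.mem_sUnion.1 (hcov ▸ Set.mem_univ (ε • w))
    exact hε P hP hεP
  have htends : Tendsto (fun ε : ℝ => ε • w) (𝓝[>] 0) (𝓝 0) := by
    have hcont : Continuous fun ε : ℝ => ε • w := by fun_prop
    simpa using (hcont.tendsto 0).mono_left nhdsWithin_le_nhds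
  obtain ⟨ε, hεP, hε⟩ := (hfreq.and_eventually self_mem_nhdsWithin).exists
  exact ⟨P, hP, (hclosed P hP).mem_of_frequently_of_tendsto hfreq htends, ε, hε, hεP⟩

theorem IsPolyhedralSubdivision.coneHull_of_zero_mem
    {𝒞 : Set (Set (EuclideanSpace ℝ (Fin q)))} (h𝒞 : IsPolyhedralSubdivision 𝒞) :
    IsPolyhedralSubdivision {Q | ∃ P ∈ 𝒞, 0 ∈ P ∧ Q = coneHull P} := by
  obtain ⟨hfin, hmem, hcov, hpair⟩ := h𝒞
  refine ⟨(hfin.image coneHull).subset ?_, ?_, ?_, ?_⟩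
  · rintro _ ⟨P, hP, -, rfl⟩
    exact ⟨P, hP, rfl⟩
  · rintro _ ⟨P, hP, h0, rfl⟩
    exact ⟨(hmem P hP).1.coneHull h0, (hmem P hP).2.mono (interior_mono (subset_coneHull P))⟩
  · refine Set.eq_univ_of_forall fun w => ?_
    obtain ⟨P, hP, h0, ε, hε, hεw⟩ :=
      hfin.exists_zero_mem_smul_mem_of_closed_cover (fun P hP => (hmem P hP).1.isClosed) hcov w
    exact ⟨coneHull P, ⟨P, hP, h0, rfl⟩, mem_coneHull_iff_exists_smul_mem.2 ⟨ε, hε, hεw⟩⟩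
  · rintro _ ⟨P, hP, hP0, rfl⟩ _ ⟨R, hR, hR0, rfl⟩ hne
    have hPc := (hmem P hP).1.convex
    have hRc := (hmem R hR).1.convex
    rcases hpair P hP R hR (ne_of_apply_ne _ hne) with hempty | ⟨hFP, hFR⟩
    · exact absurd (hempty ▸ ⟨hP0, hR0⟩ : (0 : EuclideanSpace ℝ (Fin q)) ∈ (∅ : Set _)) id
    · right
      rw [← coneHull_inter hPc hRc hP0 hR0]
      exact ⟨hFP.coneHull hPc ⟨hP0, hR0⟩, hFR.coneHull hRc ⟨hP0, hR0⟩⟩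

theorem localized_family_is_conical_subdivision_general {q : ℕ}
    (𝒞 : Set (Set (EuclideanSpace ℝ (Fin q)))) (h𝒞 : IsPolyhedralSubdivision 𝒞)
    (x : EuclideanSpace ℝ (Fin q)) :
    IsPolyhedralSubdivision
      {Q | ∃ P ∈ 𝒞, x ∈ P ∧ Q = coneHull ((fun p => p - x) '' P)} ∧
    ∀ Q ∈ {Q | ∃ P ∈ 𝒞, x ∈ P ∧ Q = coneHull ((fun p => p - x) '' P)},
      ∀ v ∈ Q, ∀ c : ℝ, 0 < c → c • v ∈ Q := by
  have hfamily : {Q | ∃ P ∈ 𝒞, x ∈ P ∧ Q = coneHull ((fun p => p - x) '' P)} =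
      {Q | ∃ P ∈ (fun P => (fun p => p - x) '' P) '' 𝒞, 0 ∈ P ∧ Q = coneHull P} := by
    ext Q
    constructor
    · rintro ⟨P, hP, hxP, rfl⟩
      exact ⟨_, ⟨P, hP, rfl⟩, mem_image_sub_const.2 (by rwa [zero_add]), rfl⟩
    · rintro ⟨_, ⟨P, hP, rfl⟩, h0, rfl⟩
      exact ⟨P, hP, by simpa using mem_image_sub_const.1 h0, rfl⟩
  refine ⟨hfamily ▸ (h𝒞.image_sub_const x).coneHull_of_zero_mem, ?_⟩
  rintro Q ⟨P, -, -, rfl⟩ v hv c hc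
  exact smul_mem_coneHull hc hv

/-- let `f : ℝ^q → ℝ^m` be a (continuous) piecewise affine function
with corresponding polyhedral subdivision `𝒞`. Then for every `x`, the family
`𝒞'(x) = {cone(P - x) : P ∈ 𝒞, x ∈ P}` is a conical subdivision of `ℝ^q`: a
polyhedral subdivision all of whose members are cones. -/
theorem localized_family_is_conical_subdivision {q m : ℕ}
    (𝒞 : Set (Set (EuclideanSpace ℝ (Fin q)))) (h𝒞 : IsPolyhedralSubdivision 𝒞)
    (f : EuclideanSpace ℝ (Fin q) → EuclideanSpace ℝ (Fin m)) (hf : Continuous f)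
    (haff : ∀ P ∈ 𝒞, ∃ (A : EuclideanSpace ℝ (Fin q) →ₗ[ℝ] EuclideanSpace ℝ (Fin m))
      (b : EuclideanSpace ℝ (Fin m)), ∀ z ∈ P, f z = A z + b)
    (x : EuclideanSpace ℝ (Fin q)) :
    IsPolyhedralSubdivision
      {Q | ∃ P ∈ 𝒞, x ∈ P ∧ Q = coneHull ((fun p => p - x) '' P)} ∧
    ∀ Q ∈ {Q | ∃ P ∈ 𝒞, x ∈ P ∧ Q = coneHull ((fun p => p - x) '' P)},
      ∀ v ∈ Q, ∀ c : ℝ, 0 < c → c • v ∈ Q :=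
  localized_family_is_conical_subdivision_general 𝒞 h𝒞 x
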